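/- Fix θ ∈ (0,1), let d_θ be the standard metric on Ω = {1,...,d}^ℕ, and let log J : Ω → ℝ be Lipschitz with respect to d_θ and normalized (∑_{a=1}^d J(a⌢x) = 1 for all x). Then there exist δ > 0, t ∈ ℕ with t ≥ 1, and α ∈ (0,1) such that, setting d(x,y) = min{1, δ⁻¹ d_θ(x,y)} (a metric equivalent to d_θ), for all x, y ∈ Ω the 1-Wasserstein distance for the metric d satisfies W₁((ℒ*)ᵗ(δ_x), (ℒ*)ᵗ(δ_y)) ≤ α · d(x,y), where W₁(μ,ν) = inf over couplings Γ of μ and ν of ∫ d(x',y') dΓ(x',y'). -/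

import Mathlib

open MeasureTheory Finset

/-- The metric `d_θ` on `Ω = {1,…,d}^ℕ`: `d_θ(x,y) = θ^N` where `N` is the first index
at which `x` and `y` disagree, and `d_θ(x,y) = 0` if `x = y`. -/
noncomputable def dTheta {d : ℕ} (θ : ℝ) (x y : ℕ → Fin d) : ℝ :=
  letI := Classical.dec (x = y)
  if h : x = y then 0 else θ ^ Nat.find (Function.ne_iff.mp h)

/-- Prepending a symbol: `a⌢x`. -/
def cons {d : ℕ} (a : Fin d) (x : ℕ → Fin d) : ℕ → Fin d :=
  fun n => match n with
  | 0 => a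
  | m + 1 => x m

/-- The dual `ℒ*` of the Ruelle operator of the potential `log J`, acting on Borel
measures on `Ω = {1,…,d}^ℕ`: it satisfies `∫ ψ d(ℒ*ν) = ∫ ℒψ dν` where
`(ℒψ)(x) = ∑_a J(a⌢x) ψ(a⌢x)`; on a Dirac mass, `ℒ*(δ_x) = ∑_a J(a⌢x) δ_{a⌢x}`. -/
noncomputable def dualRuelle {d : ℕ} (J : (ℕ → Fin d) → ℝ)
    (ν : Measure (ℕ → Fin d)) : Measure (ℕ → Fin d) :=
  ν.bind (fun x => ∑ a : Fin d, ENNReal.ofReal (J (cons a x)) • Measure.dirac (cons a x))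

/-- The optimal transport cost (for the cost `c`) between two measures on `Ω`:
the infimum over couplings `Γ` of `∫ c dΓ`.  For `c` a metric `d` this is the
`1`-Wasserstein distance `W₁`. -/
noncomputable def Wcost {d : ℕ} (c : ((ℕ → Fin d) × (ℕ → Fin d)) → ℝ)
    (μ ν : Measure (ℕ → Fin d)) : ℝ :=
  sInf {r : ℝ | ∃ Γ : Measure ((ℕ → Fin d) × (ℕ → Fin d)),
    Γ.map Prod.fst = μ ∧ Γ.map Prod.snd = ν ∧ r = ∫ p, c p ∂Γ}

/-!
Since `(ℒ*)ᵗ(δ_x) = ∑_w J^t(w⌢x) δ_{w⌢x}`, the two measures are indexed by the same words `w`.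
Bounded distortion, `|log J^t(w⌢x) - log J^t(w⌢y)| ≤ C d_θ(x,y)` with `C = Mθ/(1-θ)` independent
of `t`, shows that they share mass at least `exp(-C d_θ(x,y))`. Transport this common mass along
`w⌢x ↦ w⌢y`, which shrinks distances by `θᵗ`, and the rest arbitrarily at cost at most `1`.
When `d_θ(x,y) ≤ δ` the unshared mass is at most `C d_θ(x,y) = Cδ · d(x,y)`; when `d_θ(x,y) > δ`
at least `exp(-C)` of the mass moves at cost at most `1/2`. Taking `δ` small against `1/C` and
then `θᵗ` small against `δ` gives the contraction factor `α = 1 - exp(-C)/2`.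
-/

namespace MeasureTheory.Measure

variable {α β ι : Type*} [MeasurableSpace α] [MeasurableSpace β] [MeasurableSingletonClass α]

lemma aemeasurable_sum_smul_dirac {f : α → β} (s : Finset ι) (c : ι → ENNReal) (z : ι → α) :
    AEMeasurable f (∑ i ∈ s, c i • dirac (z i)) := by
  rw [← sum_coe_finset]
  exact .sum_measure fun _ => aemeasurable_dirac.smul_measure _

lemma bind_sum_smul_dirac (s : Finset ι) (c : ι → ENNReal) (z : ι → α) (f : α → Measure β) :
    (∑ i ∈ s, c i • dirac (z i)).bind f = ∑ i ∈ s, c i • f (z i) := by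
  ext A hA
  rw [bind_apply hA (aemeasurable_sum_smul_dirac s c z)]
  simp [lintegral_finsetSum_measure, lintegral_dirac]

lemma map_sum_smul_dirac [MeasurableSingletonClass β] (s : Finset ι) (c : ι → ENNReal)
    (z : ι → α) (f : α → β) :
    (∑ i ∈ s, c i • dirac (z i)).map f = ∑ i ∈ s, c i • dirac (f (z i)) := by
  rw [map_finset_sum (aemeasurable_sum_smul_dirac s c z)]
  simp

end MeasureTheory.Measure

lemma MeasureTheory.integral_sum_smul_dirac {α ι : Type*} [MeasurableSpace α]
    [MeasurableSingletonClass α] (s : Finset ι) {c : ι → ℝ} (hc : ∀ i ∈ s, 0 ≤ c i)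
    (z : ι → α) (f : α → ℝ) :
    ∫ a, f a ∂(∑ i ∈ s, ENNReal.ofReal (c i) • Measure.dirac (z i)) = ∑ i ∈ s, c i * f (z i) := by
  rw [integral_finsetSum_measure fun i _ =>
    (integrable_dirac enorm_lt_top).smul_measure ENNReal.ofReal_ne_top]
  refine sum_congr rfl fun i hi => ?_
  rw [integral_smul_measure, integral_dirac, ENNReal.toReal_ofReal (hc i hi), smul_eq_mul]

lemma Fintype.sum_pi_fin_succ {β M : Type*} [Fintype β] [AddCommMonoid M] (t : ℕ)
    (g : (Fin (t + 1) → β) → M) :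
    ∑ w, g w = ∑ a : β, ∑ w : Fin t → β, g (Fin.cons a w) := by
  rw [← (Fin.consEquiv fun _ => β).sum_comp, Fintype.sum_prod_type]
  rfl

lemma exists_nonneg_sum_eq_of_sum_eq {ι κ : Type*} [Fintype ι] [Fintype κ] {a : ι → ℝ}
    {b : κ → ℝ} (ha : ∀ i, 0 ≤ a i) (hb : ∀ j, 0 ≤ b j) (hab : ∑ i, a i = ∑ j, b j) :
    ∃ π : ι → κ → ℝ, (∀ i j, 0 ≤ π i j) ∧ (∀ i, ∑ j, π i j = a i) ∧ (∀ j, ∑ i, π i j = b j) := by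
  by_cases h : ∑ i, a i = 0
  · have ha0 : ∀ i, a i = 0 := by simpa [sum_eq_zero_iff_of_nonneg fun i _ => ha i] using h
    have hb0 : ∀ j, b j = 0 := by
      simpa [sum_eq_zero_iff_of_nonneg fun j _ => hb j] using hab.symm.trans h
    exact ⟨0, fun _ _ => le_rfl, by simp [ha0], by simp [hb0]⟩
  refine ⟨fun i j => a i * b j / ∑ i, a i,
    fun i j => div_nonneg (mul_nonneg (ha i) (hb j)) (sum_nonneg fun i _ => ha i),
    fun i => ?_, fun j => ?_⟩
  · rw [← sum_div, ← mul_sum, ← hab, mul_div_assoc, div_self h, mul_one]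
  · rw [← sum_div, ← sum_mul, mul_div_right_comm, div_self h, one_mul]

section Transport

variable {d : ℕ}

lemma Wcost_le_of_coupling {ι κ : Type*} [Fintype ι] [Fintype κ]
    {c : (ℕ → Fin d) × (ℕ → Fin d) → ℝ} (hc : ∀ z, 0 ≤ c z) {p : ι → ℝ} {q : κ → ℝ}
    (x : ι → ℕ → Fin d) (y : κ → ℕ → Fin d) (π : ι → κ → ℝ) (hπ : ∀ i j, 0 ≤ π i j)
    (hp : ∀ i, ∑ j, π i j = p i) (hq : ∀ j, ∑ i, π i j = q j) :
    Wcost c (∑ i, ENNReal.ofReal (p i) • Measure.dirac (x i))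
        (∑ j, ENNReal.ofReal (q j) • Measure.dirac (y j)) ≤
      ∑ i, ∑ j, π i j * c (x i, y j) := by
  set Γ := ∑ u : ι × κ, ENNReal.ofReal (π u.1 u.2) • Measure.dirac (x u.1, y u.2)
  refine csInf_le ⟨0, ?_⟩ ⟨Γ, ?_, ?_, ?_⟩
  · rintro r ⟨Γ', -, -, rfl⟩
    exact integral_nonneg hc
  · simp_rw [Γ, Measure.map_sum_smul_dirac, Fintype.sum_prod_type, ← sum_smul, ← hp,
      ENNReal.ofReal_sum_of_nonneg fun j _ => hπ _ j]
  · simp_rw [Γ, Measure.map_sum_smul_dirac, Fintype.sum_prod_type_right, ← sum_smul, ← hq,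
      ENNReal.ofReal_sum_of_nonneg fun i _ => hπ i _]
  · rw [integral_sum_smul_dirac _ fun u _ => hπ u.1 u.2, Fintype.sum_prod_type]

/-- The maximal coupling: the common mass `min (p i) (q i)` stays on the diagonal, the rest is
coupled by the normalised product of the two residual masses. -/
lemma Wcost_le_sum_min_mul_add {ι : Type*} [Fintype ι] [DecidableEq ι]
    {c : (ℕ → Fin d) × (ℕ → Fin d) → ℝ} (hc0 : ∀ z, 0 ≤ c z) (hc1 : ∀ z, c z ≤ 1)
    {p q : ι → ℝ} (hp : ∀ i, 0 ≤ p i) (hq : ∀ i, 0 ≤ q i) (hpq : ∑ i, p i = ∑ i, q i)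
    (x y : ι → ℕ → Fin d) :
    Wcost c (∑ i, ENNReal.ofReal (p i) • Measure.dirac (x i))
        (∑ i, ENNReal.ofReal (q i) • Measure.dirac (y i)) ≤
      ∑ i, min (p i) (q i) * c (x i, y i) + (∑ i, p i - ∑ i, min (p i) (q i)) := by
  set m := fun i => min (p i) (q i)
  obtain ⟨ρ, hρ0, hρp, hρq⟩ := exists_nonneg_sum_eq_of_sum_eq (a := p - m) (b := q - m)
    (fun i => sub_nonneg.2 (min_le_left _ _)) (fun i => sub_nonneg.2 (min_le_right _ _))
    (by simp [sum_sub_distrib, hpq])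
  refine (Wcost_le_of_coupling hc0 x y (fun i j => (if i = j then m i else 0) + ρ i j)
    (fun i j => add_nonneg (by split_ifs <;> simp [m, hp, hq]) (hρ0 i j))
    (fun i => by simp [sum_add_distrib, hρp]) (fun j => by simp [sum_add_distrib, hρq])).trans ?_
  have hρc : ∑ i, ∑ j, ρ i j * c (x i, y j) ≤ ∑ i, ∑ j, ρ i j := by
    gcongr with i _ j _
    exact mul_le_of_le_one_right (hρ0 i j) (hc1 _)
  have hρsum : ∑ i, ∑ j, ρ i j = ∑ i, p i - ∑ i, m i := by simp [hρp, sum_sub_distrib]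
  simp only [add_mul, sum_add_distrib, ite_mul, zero_mul, sum_ite_eq, mem_univ, if_true]
  linarith

end Transport

section SymbolicDynamics

variable {d : ℕ} {θ : ℝ}

@[simp] lemma cons_zero (a : Fin d) (x : ℕ → Fin d) : cons a x 0 = a := rfl

@[simp] lemma cons_succ (a : Fin d) (x : ℕ → Fin d) (n : ℕ) : cons a x (n + 1) = x n := rfl

lemma cons_inj_right {a : Fin d} {x y : ℕ → Fin d} : cons a x = cons a y ↔ x = y :=
  ⟨fun h => funext fun n => congrFun h (n + 1), congrArg _⟩

lemma dTheta_nonneg (hθ : 0 ≤ θ) (x y : ℕ → Fin d) : 0 ≤ dTheta θ x y := by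
  unfold dTheta
  split
  exacts [le_rfl, pow_nonneg hθ _]

lemma dTheta_le_one (hθ0 : 0 ≤ θ) (hθ1 : θ ≤ 1) (x y : ℕ → Fin d) : dTheta θ x y ≤ 1 := by
  unfold dTheta
  split
  exacts [zero_le_one, pow_le_one₀ hθ0 hθ1]

lemma dTheta_cons (a : Fin d) (x y : ℕ → Fin d) :
    dTheta θ (cons a x) (cons a y) = θ * dTheta θ x y := by
  by_cases h : x = y
  · simp [dTheta, h]
  have h' : cons a x ≠ cons a y := cons_inj_right.not.2 h
  have hfind : Nat.find (Function.ne_iff.mp h') = Nat.find (Function.ne_iff.mp h) + 1 := by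
    rw [Nat.find_eq_iff]
    refine ⟨by simpa using Nat.find_spec (Function.ne_iff.mp h), fun n hn => ?_⟩
    cases n with
    | zero => simp
    | succ m => simpa using Nat.find_min (Function.ne_iff.mp h) (by omega : m < _)
  simp only [dTheta, dif_neg h, dif_neg h', hfind, pow_succ']

def prependWord : {t : ℕ} → (Fin t → Fin d) → (ℕ → Fin d) → ℕ → Fin d
  | 0, _, x => x
  | _ + 1, w, x => cons (w 0) (prependWord (Fin.tail w) x)

/-- The Jacobian `J^t(w⌢x) = ∏_{i<t} J(σ^i(w⌢x))` of the word `w` of length `t`. -/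
noncomputable def wordWeight (J : (ℕ → Fin d) → ℝ) :
    {t : ℕ} → (Fin t → Fin d) → (ℕ → Fin d) → ℝ
  | 0, _, _ => 1
  | _ + 1, w, x => J (prependWord w x) * wordWeight J (Fin.tail w) x

@[simp] lemma prependWord_elim0 (w : Fin 0 → Fin d) (x : ℕ → Fin d) : prependWord w x = x := rfl

@[simp] lemma prependWord_cons {t : ℕ} (a : Fin d) (w : Fin t → Fin d) (x : ℕ → Fin d) :
    prependWord (Fin.cons a w) x = cons a (prependWord w x) := by
  simp [prependWord]

@[simp] lemma wordWeight_elim0 (J : (ℕ → Fin d) → ℝ) (w : Fin 0 → Fin d) (x : ℕ → Fin d) :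
    wordWeight J w x = 1 := rfl

@[simp] lemma wordWeight_cons (J : (ℕ → Fin d) → ℝ) {t : ℕ} (a : Fin d) (w : Fin t → Fin d)
    (x : ℕ → Fin d) :
    wordWeight J (Fin.cons a w) x = J (cons a (prependWord w x)) * wordWeight J w x := by
  simp [wordWeight]

lemma dTheta_prependWord {t : ℕ} (w : Fin t → Fin d) (x y : ℕ → Fin d) :
    dTheta θ (prependWord w x) (prependWord w y) = θ ^ t * dTheta θ x y := by
  induction w using Fin.consInduction with
  | elim0 => simp
  | cons a w ih => rw [prependWord_cons, prependWord_cons, dTheta_cons, ih, pow_succ']; ring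

variable {J : (ℕ → Fin d) → ℝ}

lemma wordWeight_nonneg (hJ : ∀ x, 0 ≤ J x) {t : ℕ} (w : Fin t → Fin d) (x : ℕ → Fin d) :
    0 ≤ wordWeight J w x := by
  induction w using Fin.consInduction with
  | elim0 => simp
  | cons a w ih => simpa using mul_nonneg (hJ _) ih

lemma wordWeight_pos (hJ : ∀ x, 0 < J x) {t : ℕ} (w : Fin t → Fin d) (x : ℕ → Fin d) :
    0 < wordWeight J w x := by
  induction w using Fin.consInduction with
  | elim0 => simp
  | cons a w ih => simpa using mul_pos (hJ _) ih

lemma sum_wordWeight (hJ : ∀ x, ∑ a : Fin d, J (cons a x) = 1) (t : ℕ) (x : ℕ → Fin d) :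
    ∑ w : Fin t → Fin d, wordWeight J w x = 1 := by
  induction t with
  | zero => simp
  | succ t ih =>
    simp only [Fintype.sum_pi_fin_succ, wordWeight_cons]
    rw [sum_comm]
    simp only [← sum_mul, hJ, one_mul, ih]

lemma abs_log_wordWeight_sub_le (hJ : ∀ x, 0 < J x) {M : ℝ}
    (hJlip : ∀ u v, |Real.log (J u) - Real.log (J v)| ≤ M * dTheta θ u v)
    {t : ℕ} (w : Fin t → Fin d) (x y : ℕ → Fin d) :
    |Real.log (wordWeight J w x) - Real.log (wordWeight J w y)| ≤
      M * θ * (∑ k ∈ range t, θ ^ k) * dTheta θ x y := by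
  induction w using Fin.consInduction with
  | elim0 => simp
  | @cons t a w ih =>
    have hhead := hJlip (cons a (prependWord w x)) (cons a (prependWord w y))
    rw [dTheta_cons, dTheta_prependWord] at hhead
    simp only [wordWeight_cons]
    rw [Real.log_mul (hJ _).ne' (wordWeight_pos hJ w x).ne',
      Real.log_mul (hJ _).ne' (wordWeight_pos hJ w y).ne', sum_range_succ]
    calc _ ≤ |Real.log (J (cons a (prependWord w x))) - Real.log (J (cons a (prependWord w y)))|
          + |Real.log (wordWeight J w x) - Real.log (wordWeight J w y)| := by
          rw [add_sub_add_comm]; exact abs_add_le _ _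
      _ ≤ _ := add_le_add hhead ih
      _ = _ := by ring

end SymbolicDynamics

section Contraction

variable {d : ℕ} {θ : ℝ} {J : (ℕ → Fin d) → ℝ}

lemma dualRuelle_iterate_dirac (hJ : ∀ x, 0 ≤ J x) (t : ℕ) (x : ℕ → Fin d) :
    (dualRuelle J)^[t] (Measure.dirac x) =
      ∑ w : Fin t → Fin d, ENNReal.ofReal (wordWeight J w x) • Measure.dirac (prependWord w x) := by
  induction t with
  | zero => simp
  | succ t ih =>
    rw [Function.iterate_succ_apply', ih, dualRuelle, Measure.bind_sum_smul_dirac,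
      Fintype.sum_pi_fin_succ, sum_comm]
    refine sum_congr rfl fun w _ => ?_
    rw [smul_sum]
    refine sum_congr rfl fun a _ => ?_
    rw [smul_smul, wordWeight_cons, prependWord_cons, mul_comm,
      ENNReal.ofReal_mul (hJ _)]

/-- The mass shared by `(ℒ*)ᵗ(δ_x)` and `(ℒ*)ᵗ(δ_y)`. -/
noncomputable def overlap (J : (ℕ → Fin d) → ℝ) (t : ℕ) (x y : ℕ → Fin d) : ℝ :=
  ∑ w : Fin t → Fin d, min (wordWeight J w x) (wordWeight J w y)

lemma overlap_le_one (hJnorm : ∀ x, ∑ a : Fin d, J (cons a x) = 1) (t : ℕ) (x y : ℕ → Fin d) :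
    overlap J t x y ≤ 1 :=
  (sum_le_sum fun _ _ => min_le_left _ _).trans (sum_wordWeight hJnorm t x).le

lemma exp_neg_mul_le_min {a b K : ℝ} (ha : 0 < a) (hb : 0 < b)
    (h : |Real.log a - Real.log b| ≤ K) : Real.exp (-K) * a ≤ min a b := by
  have hK : 0 ≤ K := (abs_nonneg _).trans h
  refine le_min (mul_le_of_le_one_left ha.le (Real.exp_le_one_iff.2 (neg_nonpos.2 hK))) ?_
  calc Real.exp (-K) * a = Real.exp (Real.log a - K) := by
        rw [Real.exp_sub, Real.exp_log ha, Real.exp_neg]; ring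
    _ ≤ Real.exp (Real.log b) := Real.exp_le_exp.2 (by linarith [(abs_le.1 h).2])
    _ = b := Real.exp_log hb

lemma exp_neg_mul_dTheta_le_overlap (hθ0 : 0 ≤ θ) (hθ1 : θ < 1) (hJ : ∀ x, 0 < J x)
    (hJnorm : ∀ x, ∑ a : Fin d, J (cons a x) = 1) {M : ℝ} (hM : 0 ≤ M)
    (hJlip : ∀ u v, |Real.log (J u) - Real.log (J v)| ≤ M * dTheta θ u v)
    (t : ℕ) (x y : ℕ → Fin d) :
    Real.exp (-(M * θ / (1 - θ) * dTheta θ x y)) ≤ overlap J t x y := by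
  have hgeom : M * θ * ∑ k ∈ range t, θ ^ k ≤ M * θ / (1 - θ) := by
    rw [div_eq_mul_inv]
    gcongr
    simpa using geom_sum_Ico_le_of_lt_one (m := 0) (n := t) hθ0 hθ1
  have hlog (w : Fin t → Fin d) := (abs_log_wordWeight_sub_le hJ hJlip w x y).trans
    (mul_le_mul_of_nonneg_right hgeom (dTheta_nonneg hθ0 x y))
  calc _ = ∑ w : Fin t → Fin d, Real.exp (-(M * θ / (1 - θ) * dTheta θ x y)) * wordWeight J w x := by
        rw [← mul_sum, sum_wordWeight hJnorm, mul_one]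
    _ ≤ overlap J t x y :=
        sum_le_sum fun w _ => exp_neg_mul_le_min (wordWeight_pos hJ w x) (wordWeight_pos hJ w y)
          (hlog w)

lemma Wcost_dualRuelle_iterate_le (hJ : ∀ x, 0 ≤ J x)
    (hJnorm : ∀ x, ∑ a : Fin d, J (cons a x) = 1) {c : (ℕ → Fin d) × (ℕ → Fin d) → ℝ}
    (hc0 : ∀ z, 0 ≤ c z) (hc1 : ∀ z, c z ≤ 1) {t : ℕ} {x y : ℕ → Fin d} {κ : ℝ}
    (hκ : ∀ w : Fin t → Fin d, c (prependWord w x, prependWord w y) ≤ κ) :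
    Wcost c ((dualRuelle J)^[t] (Measure.dirac x)) ((dualRuelle J)^[t] (Measure.dirac y)) ≤
      overlap J t x y * κ + (1 - overlap J t x y) := by
  classical
  rw [dualRuelle_iterate_dirac hJ, dualRuelle_iterate_dirac hJ]
  refine (Wcost_le_sum_min_mul_add hc0 hc1 (wordWeight_nonneg hJ · x) (wordWeight_nonneg hJ · y)
    (by rw [sum_wordWeight hJnorm, sum_wordWeight hJnorm]) _ _).trans ?_
  rw [sum_wordWeight hJnorm, overlap, sum_mul]
  gcongr with w
  · exact le_min (wordWeight_nonneg hJ w x) (wordWeight_nonneg hJ w y)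
  · exact hκ w

end Contraction

lemma mul_add_one_sub_le_mul_min {C D s δ τ : ℝ} (hC : 0 ≤ C) (hD0 : 0 ≤ D) (hD1 : D ≤ 1)
    (hs : Real.exp (-(C * D)) ≤ s) (hs1 : s ≤ 1) (hδ : 0 < δ) (hδ2 : δ ≤ 1 / 2)
    (hCδ : C * δ ≤ 1 / 4) (hτ0 : 0 ≤ τ) (hτ : τ ≤ δ / 2) :
    s * (δ⁻¹ * (τ * D)) + (1 - s) ≤ (1 - Real.exp (-C) / 2) * min 1 (δ⁻¹ * D) := by
  have hε : Real.exp (-C) ≤ s :=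
    (Real.exp_le_exp.2 (neg_le_neg (mul_le_of_le_one_right hC hD1))).trans hs
  have hε1 : Real.exp (-C) ≤ 1 := Real.exp_le_one_iff.2 (neg_nonpos.2 hC)
  have hs0 : 0 ≤ s := (Real.exp_pos _).le.trans hε
  rcases le_total D δ with hDδ | hδD
  · rw [min_eq_right ((inv_mul_le_one₀ hδ).2 hDδ)]
    have h1s : 1 - s ≤ C * δ * (δ⁻¹ * D) := by
      rw [mul_assoc, mul_inv_cancel_left₀ hδ.ne']
      linarith [Real.add_one_le_exp (-(C * D))]
    have hE : 0 ≤ δ⁻¹ * D := mul_nonneg (inv_nonneg.2 hδ.le) hD0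
    calc s * (δ⁻¹ * (τ * D)) + (1 - s) ≤ τ * (δ⁻¹ * D) + C * δ * (δ⁻¹ * D) := by
          rw [mul_left_comm δ⁻¹]
          exact add_le_add (mul_le_of_le_one_left (mul_nonneg hτ0 hE) hs1) h1s
      _ ≤ (1 - Real.exp (-C) / 2) * (δ⁻¹ * D) := by
          rw [← add_mul]
          gcongr
          linarith
  · rw [min_eq_left ((one_le_inv_mul₀ hδ).2 hδD)]
    have hhalf : δ⁻¹ * (τ * D) ≤ 1 / 2 := by
      rw [inv_mul_le_iff₀ hδ]
      nlinarith
    nlinarith [mul_le_mul_of_nonneg_left hhalf hs0]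

/-- for a normalized `d_θ`-Lipschitz potential `log J` there are `δ > 0`,
`t ≥ 1` and `α ∈ (0,1)` such that, with the equivalent metric
`d(x,y) = min{1, δ⁻¹ d_θ(x,y)}`, one has
`W₁((ℒ*)ᵗ(δ_x), (ℒ*)ᵗ(δ_y)) ≤ α d(x,y)` for all `x, y`. -/
theorem dualRuelle_contracts_on_diracs
    (d : ℕ) (θ : ℝ) (hθ0 : 0 < θ) (hθ1 : θ < 1)
    (J : (ℕ → Fin d) → ℝ) (hJpos : ∀ x, 0 < J x)
    (M : ℝ) (hJlip : ∀ u v, |Real.log (J u) - Real.log (J v)| ≤ M * dTheta θ u v)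
    (hJnorm : ∀ x, ∑ a : Fin d, J (cons a x) = 1) :
    ∃ (δ : ℝ) (t : ℕ) (α : ℝ), 0 < δ ∧ 1 ≤ t ∧ 0 < α ∧ α < 1 ∧
      ∀ x y : ℕ → Fin d,
        Wcost (fun p => min 1 (δ⁻¹ * dTheta θ p.1 p.2))
            ((dualRuelle J)^[t] (Measure.dirac x))
            ((dualRuelle J)^[t] (Measure.dirac y)) ≤
          α * min 1 (δ⁻¹ * dTheta θ x y) := by
  have hlip (u v : ℕ → Fin d) : |Real.log (J u) - Real.log (J v)| ≤ max M 0 * dTheta θ u v :=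
    (hJlip u v).trans (mul_le_mul_of_nonneg_right (le_max_left M 0) (dTheta_nonneg hθ0.le u v))
  set C := max M 0 * θ / (1 - θ)
  have hC : 0 ≤ C := div_nonneg (mul_nonneg (le_max_right M 0) hθ0.le) (sub_nonneg.2 hθ1.le)
  set δ := 1 / (4 * C + 4)
  have hδ : 0 < δ := by positivity
  have hδ2 : δ ≤ 1 / 2 := by rw [div_le_div_iff₀ (by positivity) two_pos]; linarith
  have hCδ : C * δ ≤ 1 / 4 := by rw [mul_one_div, div_le_div_iff₀ (by positivity) four_pos]; linarith
  obtain ⟨t, ht⟩ := exists_pow_lt_of_lt_one (half_pos hδ) hθ1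
  have hτ : θ ^ (t + 1) ≤ δ / 2 := (pow_le_pow_of_le_one hθ0.le hθ1.le t.le_succ).trans ht.le
  have hε1 : Real.exp (-C) ≤ 1 := Real.exp_le_one_iff.2 (neg_nonpos.2 hC)
  refine ⟨δ, t + 1, 1 - Real.exp (-C) / 2, hδ, le_add_self, by linarith,
    by linarith [Real.exp_pos (-C)], fun x y => ?_⟩
  calc _ ≤ overlap J (t + 1) x y * (δ⁻¹ * (θ ^ (t + 1) * dTheta θ x y)) +
        (1 - overlap J (t + 1) x y) :=
      Wcost_dualRuelle_iterate_le (fun x => (hJpos x).le) hJnorm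
        (fun _ => le_min zero_le_one (mul_nonneg (inv_nonneg.2 hδ.le) (dTheta_nonneg hθ0.le _ _)))
        (fun _ => min_le_left _ _) fun w => by rw [dTheta_prependWord]; exact min_le_right _ _
    _ ≤ _ := mul_add_one_sub_le_mul_min hC (dTheta_nonneg hθ0.le x y)
        (dTheta_le_one hθ0.le hθ1.le x y)
        (exp_neg_mul_dTheta_le_overlap hθ0.le hθ1 hJpos hJnorm (le_max_right M 0) hlip _ x y)
        (overlap_le_one hJnorm _ x y) hδ hδ2 hCδ (by positivity) hτ
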